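/- In the Clifford Hayden–Preskill problem with perfect decoupling (Λ_D injective, hence bijective from Pauli_A mod phase onto its image, with d_D ≥ d_A), for every Pauli operator P_A on A there exists a Pauli operator Q_D on D such that the backward evolution U^† Q_D U ≃ P_A ⊗ Ω_B(Q_D), i.e. the backward time-evolution map Ω_A : Pauli_D → Pauli_A is surjective. -/

import Mathlib

/-!
Conjugation by `U` is multiplicative and Pauli operators multiply by adding their labels up to a
phase, so the `D`-label of `U (P ⊗ 1) U†` depends additively on the label of `P`: `Λ_D` is
`𝔽₂`-linear. Conjugation also preserves the sign `s` in a relation `M N = s • N M`.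
Comparing that sign for `P ⊗ 1` and `U† (1 ⊗ Q) U` before and after conjugation gives
`ω(Λ_D P, Q) = ω(P, Ω_A Q)` for the symplectic forms `ω`; thus `Ω_A` is the adjoint of the
injective map `Λ_D` with respect to nondegenerate forms, hence surjective.
-/

open Matrix Kronecker BigOperators

/-- The `n`-qubit Pauli operator `X^x Z^z` (symplectic representation). -/
noncomputable def pauli {n : ℕ} (x z : Fin n → ZMod 2) :
    Matrix (Fin n → ZMod 2) (Fin n → ZMod 2) ℂ :=
  fun j k => if j = k + x then ((-1 : ℂ)) ^ (∑ i, (z i * k i).val) else 0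

theorem LinearMap.BilinForm.surjective_of_adjoint_of_injective {K V W : Type*} [Field K]
    [AddCommGroup V] [Module K V] [AddCommGroup W] [Module K W] [FiniteDimensional K W]
    {BV : LinearMap.BilinForm K V} {BW : LinearMap.BilinForm K W}
    (hBV : BV.Nondegenerate) (hBW : BW.Nondegenerate)
    {f : V →ₗ[K] W} (hf : Function.Injective f) {g : W → V}
    (hfg : ∀ v w, BW (f v) w = BV v (g w)) : Function.Surjective g := by
  intro a
  obtain ⟨χ, hχ⟩ := LinearMap.dualMap_surjective_iff.mpr hf (BV.flip a)
  refine ⟨(BW.flip.toDual hBW.flip).symm χ,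
    LinearMap.ker_eq_bot.mp hBV.flip.ker_eq_bot (LinearMap.ext fun v => ?_)⟩
  change BV v (g _) = BV v a
  rw [← hfg]
  change BW.flip _ (f v) = _
  rw [apply_toDual_symm_apply, ← LinearMap.dualMap_apply, hχ]
  rfl

/-- Over `ZMod 2` this is the symplectic form of the Pauli group: `pauli x z` and `pauli x' z'`
commute up to the sign `signChar (swapPairing _ _ (x, z) (x', z'))`. -/
def swapPairing (K ι : Type*) [CommRing K] [Fintype ι] :
    LinearMap.BilinForm K ((ι → K) × (ι → K)) :=
  LinearMap.mk₂ K (fun P Q => P.2 ⬝ᵥ Q.1 + Q.2 ⬝ᵥ P.1)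
    (fun _ _ _ => by simp only [Prod.fst_add, Prod.snd_add, add_dotProduct, dotProduct_add]; ring)
    (fun _ _ _ => by
      simp only [Prod.smul_fst, Prod.smul_snd, smul_dotProduct, dotProduct_smul, smul_eq_mul]; ring)
    (fun _ _ _ => by simp only [Prod.fst_add, Prod.snd_add, add_dotProduct, dotProduct_add]; ring)
    (fun _ _ _ => by
      simp only [Prod.smul_fst, Prod.smul_snd, smul_dotProduct, dotProduct_smul, smul_eq_mul]; ring)

@[simp]
theorem swapPairing_apply {K ι : Type*} [CommRing K] [Fintype ι]
    (P Q : (ι → K) × (ι → K)) :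
    swapPairing K ι P Q = P.2 ⬝ᵥ Q.1 + Q.2 ⬝ᵥ P.1 := rfl

theorem swapPairing_nondegenerate (K ι : Type*) [CommRing K] [Fintype ι] [DecidableEq ι] :
    (swapPairing K ι).Nondegenerate := by
  have hrefl : (swapPairing K ι).IsRefl := fun P Q h => by
    rwa [swapPairing_apply, add_comm] at h
  refine hrefl.nondegenerate_iff_separatingLeft.mpr fun P hP =>
    Prod.ext (funext fun i => ?_) (funext fun i => ?_)
  · simpa using hP (0, Pi.single i 1)
  · simpa using hP (Pi.single i 1, 0)

theorem AddChar.map_sum_eq_prod {ι A M : Type*} [AddCommMonoid A] [CommMonoid M]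
    (ψ : AddChar A M) (s : Finset ι) (f : ι → A) :
    ψ (∑ i ∈ s, f i) = ∏ i ∈ s, ψ (f i) :=
  map_prod ψ.toMonoidHom (fun i => Multiplicative.ofAdd (f i)) s

noncomputable def signChar : AddChar (ZMod 2) ℂ :=
  AddChar.zmodChar 2 (by norm_num : (-1 : ℂ) ^ 2 = 1)

theorem signChar_apply (a : ZMod 2) : signChar a = (-1) ^ a.val :=
  AddChar.zmodChar_apply _ a

theorem signChar_one : signChar 1 = -1 := by
  rw [signChar_apply, ZMod.val_one, pow_one]

theorem signChar_injective : Function.Injective signChar := by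
  have cases : ∀ a : ZMod 2, a = 0 ∨ a = 1 := by decide
  intro a b h
  rcases cases a with rfl | rfl <;> rcases cases b with rfl | rfl <;>
    first | rfl | norm_num [signChar_one] at h

theorem signChar_mul_self (a : ZMod 2) : signChar a * signChar a = 1 := by
  rw [← AddChar.map_add_eq_mul, CharTwo.add_self_eq_zero, AddChar.map_zero_eq_one]

theorem signChar_ne_zero (a : ZMod 2) : signChar a ≠ 0 :=
  left_ne_zero_of_mul_eq_one (signChar_mul_self a)

section PauliAlgebra

variable {n m : ℕ}

theorem pauli_apply (x z j k : Fin n → ZMod 2) :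
    pauli x z j k = if j = k + x then signChar (z ⬝ᵥ k) else 0 := by
  simp only [pauli, dotProduct, AddChar.map_sum_eq_prod, signChar_apply,
    Finset.prod_pow_eq_pow_sum]

theorem pauli_mul (x z x' z' : Fin n → ZMod 2) :
    pauli x z * pauli x' z' = signChar (z ⬝ᵥ x') • pauli (x + x') (z + z') := by
  ext j k
  rw [mul_apply, Finset.sum_eq_single (k + x') (fun l _ hl => by simp [pauli_apply, hl])
    (by simp), Matrix.smul_apply, pauli_apply, pauli_apply, pauli_apply, if_pos rfl, add_assoc,
    add_comm x']
  split_ifs <;> simp [dotProduct_add, add_dotProduct, AddChar.map_add_eq_mul]; ring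

theorem pauli_mul_comm (x z x' z' : Fin n → ZMod 2) :
    pauli x z * pauli x' z' =
      signChar (z ⬝ᵥ x' + z' ⬝ᵥ x) • (pauli x' z' * pauli x z) := by
  rw [pauli_mul, pauli_mul, smul_smul, AddChar.map_add_eq_mul, mul_assoc, signChar_mul_self,
    mul_one, add_comm x, add_comm z]

theorem pauli_kronecker_ne_zero (x z : Fin n → ZMod 2) (u w : Fin m → ZMod 2) :
    pauli x z ⊗ₖ pauli u w ≠ 0 := fun h => by
  simpa [pauli_apply] using congr_fun₂ h (x, u) (0, 0)

theorem smul_pauli_kronecker_inj {c c' : ℂ} {x z x' z' : Fin n → ZMod 2}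
    {u w u' w' : Fin m → ZMod 2} (hc : c ≠ 0)
    (h : c • (pauli x z ⊗ₖ pauli u w) = c' • (pauli x' z' ⊗ₖ pauli u' w')) :
    c = c' ∧ x = x' ∧ z = z' ∧ u = u' ∧ w = w' := by
  have entry : ∀ k l, c * (signChar (z ⬝ᵥ k) * signChar (w ⬝ᵥ l)) =
      c' * ((if k + x = k + x' then signChar (z' ⬝ᵥ k) else 0) *
        (if l + u = l + u' then signChar (w' ⬝ᵥ l) else 0)) := fun k l => by
    simpa [pauli_apply] using congr_fun₂ h (k + x, l + u) (k, l)
  have h00 := entry 0 0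
  obtain rfl : x = x' := by_contra fun hx => by simp_all
  obtain rfl : u = u' := by_contra fun hu => by simp_all
  simp only [dotProduct_zero, AddChar.map_zero_eq_one, mul_one, if_true] at h00
  subst h00
  have sign_eq : ∀ k l, signChar (z ⬝ᵥ k) * signChar (w ⬝ᵥ l) =
      signChar (z' ⬝ᵥ k) * signChar (w' ⬝ᵥ l) := fun k l => by
    simpa [hc] using entry k l
  refine ⟨rfl, rfl, dotProduct_eq _ _ fun k => signChar_injective ?_, rfl,
    dotProduct_eq _ _ fun l => signChar_injective ?_⟩
  · simpa using sign_eq k 0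
  · simpa using sign_eq 0 l

theorem kronecker_pauli_mul (x z x' z' : Fin n → ZMod 2) (u w u' w' : Fin m → ZMod 2) :
    (pauli x z ⊗ₖ pauli u w) * (pauli x' z' ⊗ₖ pauli u' w') =
      (signChar (z ⬝ᵥ x') * signChar (w ⬝ᵥ u')) •
        (pauli (x + x') (z + z') ⊗ₖ pauli (u + u') (w + w')) := by
  rw [← mul_kronecker_mul, pauli_mul, pauli_mul, smul_kronecker, kronecker_smul, smul_smul]

end PauliAlgebra

section Conjugation

variable {l m : Type*} [Fintype l] [Fintype m] [DecidableEq m] {U : Matrix l m ℂ}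

theorem conj_mul_conj (hU : Uᴴ * U = 1) (M N : Matrix m m ℂ) :
    U * M * Uᴴ * (U * N * Uᴴ) = U * (M * N) * Uᴴ := by
  simp only [Matrix.mul_assoc]
  rw [← Matrix.mul_assoc Uᴴ U, hU, Matrix.one_mul]

theorem conj_mul_comm (hU : Uᴴ * U = 1) {M N : Matrix m m ℂ} {s : ℂ}
    (h : M * N = s • (N * M)) :
    U * M * Uᴴ * (U * N * Uᴴ) = s • (U * N * Uᴴ * (U * M * Uᴴ)) := by
  rw [conj_mul_conj hU, conj_mul_conj hU, h, Matrix.mul_smul, Matrix.smul_mul]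

end Conjugation

section KroneckerCommutation

variable {R l m : Type*} [CommRing R] [Fintype l] [Fintype m]
  {A A' : Matrix l l R} {B B' : Matrix m m R} {s : R}

theorem kronecker_mul_comm_of_left (hA : A * A' = s • (A' * A)) (hB : Commute B B') :
    (A ⊗ₖ B) * (A' ⊗ₖ B') = s • ((A' ⊗ₖ B') * (A ⊗ₖ B)) := by
  rw [← mul_kronecker_mul, ← mul_kronecker_mul, hA, hB.eq, smul_kronecker]

theorem kronecker_mul_comm_of_right (hA : Commute A A') (hB : B * B' = s • (B' * B)) :
    (A ⊗ₖ B) * (A' ⊗ₖ B') = s • ((A' ⊗ₖ B') * (A ⊗ₖ B)) := by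
  rw [← mul_kronecker_mul, ← mul_kronecker_mul, hB, hA.eq, kronecker_smul]

end KroneckerCommutation

section CliffordLabels

variable {nA nC nD : ℕ} {β : Type*} [Fintype β] [DecidableEq β]
  {U : Matrix ((Fin nC → ZMod 2) × (Fin nD → ZMod 2)) ((Fin nA → ZMod 2) × β) ℂ}

theorem conj_pauli_label_add (hU : Uᴴ * U = 1) {x z x' z' : Fin nA → ZMod 2}
    {a b a' b' a'' b'' : Fin nC → ZMod 2} {u w u' w' u'' w'' : Fin nD → ZMod 2} {c c' c'' : ℂ}
    (hc'' : c'' ≠ 0)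
    (h : U * (pauli x z ⊗ₖ (1 : Matrix β β ℂ)) * Uᴴ = c • (pauli a b ⊗ₖ pauli u w))
    (h' : U * (pauli x' z' ⊗ₖ (1 : Matrix β β ℂ)) * Uᴴ =
      c' • (pauli a' b' ⊗ₖ pauli u' w'))
    (h'' : U * (pauli (x + x') (z + z') ⊗ₖ (1 : Matrix β β ℂ)) * Uᴴ =
      c'' • (pauli a'' b'' ⊗ₖ pauli u'' w'')) :
    u'' = u + u' ∧ w'' = w + w' := by
  have key : (signChar (z ⬝ᵥ x') * c'') • (pauli a'' b'' ⊗ₖ pauli u'' w'') =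
      (c * c' * (signChar (b ⬝ᵥ a') * signChar (w ⬝ᵥ u'))) •
        (pauli (a + a') (b + b') ⊗ₖ pauli (u + u') (w + w')) :=
    calc (signChar (z ⬝ᵥ x') * c'') • (pauli a'' b'' ⊗ₖ pauli u'' w'')
        = U * ((pauli x z ⊗ₖ (1 : Matrix β β ℂ)) * (pauli x' z' ⊗ₖ 1)) * Uᴴ := by
          rw [← mul_kronecker_mul, Matrix.one_mul, pauli_mul, smul_kronecker, Matrix.mul_smul,
            Matrix.smul_mul, h'', smul_smul]
      _ = (c • (pauli a b ⊗ₖ pauli u w)) * (c' • (pauli a' b' ⊗ₖ pauli u' w')) := by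
          rw [← conj_mul_conj hU, h, h']
      _ = _ := by rw [smul_mul_smul_comm, kronecker_pauli_mul, smul_smul]
  exact (smul_pauli_kronecker_inj (mul_ne_zero (signChar_ne_zero _) hc'') key).2.2.2

theorem conj_pauli_label_duality (hU1 : U * Uᴴ = 1) (hU2 : Uᴴ * U = 1)
    {x z a' b' : Fin nA → ZMod 2} {a b : Fin nC → ZMod 2} {u w xq zq : Fin nD → ZMod 2}
    {E : Matrix β β ℂ} {c c' : ℂ} (hc : c ≠ 0)
    (hfwd : U * (pauli x z ⊗ₖ (1 : Matrix β β ℂ)) * Uᴴ =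
      c • (pauli a b ⊗ₖ pauli u w))
    (hbwd :
      Uᴴ * ((1 : Matrix (Fin nC → ZMod 2) (Fin nC → ZMod 2) ℂ) ⊗ₖ pauli xq zq) * U =
        c' • (pauli a' b' ⊗ₖ E)) :
    w ⬝ᵥ xq + zq ⬝ᵥ u = z ⬝ᵥ a' + b' ⬝ᵥ x := by
  set Q := (1 : Matrix (Fin nC → ZMod 2) (Fin nC → ZMod 2) ℂ) ⊗ₖ pauli xq zq
  have hQ : U * (Uᴴ * Q * U) * Uᴴ = Q := by
    simp only [Matrix.mul_assoc, hU1, Matrix.mul_one]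
    rw [← Matrix.mul_assoc, hU1, Matrix.one_mul]
  have comm_A : (pauli x z ⊗ₖ (1 : Matrix β β ℂ)) * (Uᴴ * Q * U) =
      signChar (z ⬝ᵥ a' + b' ⬝ᵥ x) • ((Uᴴ * Q * U) * (pauli x z ⊗ₖ 1)) := by
    rw [hbwd, Matrix.mul_smul, Matrix.smul_mul, smul_comm,
      kronecker_mul_comm_of_left (pauli_mul_comm _ _ _ _) (Commute.one_left E)]
  have comm_D : (c • (pauli a b ⊗ₖ pauli u w)) * Q =
      signChar (w ⬝ᵥ xq + zq ⬝ᵥ u) • (Q * (c • (pauli a b ⊗ₖ pauli u w))) := by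
    rw [Matrix.mul_smul, Matrix.smul_mul, smul_comm,
      kronecker_mul_comm_of_right (Commute.one_right _) (pauli_mul_comm _ _ _ _)]
  have hne : Q * (c • (pauli a b ⊗ₖ pauli u w)) ≠ 0 := by
    rw [Matrix.mul_smul, ← mul_kronecker_mul, Matrix.one_mul, pauli_mul, kronecker_smul,
      smul_smul]
    exact smul_ne_zero (mul_ne_zero hc (signChar_ne_zero _)) (pauli_kronecker_ne_zero _ _ _ _)
  have comm_A' := conj_mul_comm hU2 comm_A
  rw [hQ, hfwd] at comm_A'
  exact signChar_injective (smul_left_injective ℂ hne (comm_D.symm.trans comm_A'))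

end CliffordLabels

/-- Under perfect decoupling (injective forward map `Λ_D`), the backward
time-evolution map `Ω_A : Pauli_D → Pauli_A` is surjective: for every Pauli
`P_A` there is a Pauli `Q_D` with `U† (I ⊗ Q_D) U ≃ P_A ⊗ Ω_B(Q_D)`. -/
theorem stmt14 (nA nB nC nD : ℕ)
    (U : Matrix ((Fin nC → ZMod 2) × (Fin nD → ZMod 2))
      ((Fin nA → ZMod 2) × (Fin nB → ZMod 2)) ℂ)
    (hU1 : U * Uᴴ = 1) (hU2 : Uᴴ * U = 1)
    -- forward Clifford decomposition: Λ_C, Λ_D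
    (c : (Fin nA → ZMod 2) → (Fin nA → ZMod 2) → ℂ)
    (xc zc : (Fin nA → ZMod 2) → (Fin nA → ZMod 2) → (Fin nC → ZMod 2))
    (xd zd : (Fin nA → ZMod 2) → (Fin nA → ZMod 2) → (Fin nD → ZMod 2))
    (hClif : ∀ x z : Fin nA → ZMod 2, ‖c x z‖ = 1 ∧
      U * (pauli x z ⊗ₖ (1 : Matrix (Fin nB → ZMod 2) (Fin nB → ZMod 2) ℂ)) * Uᴴ
        = c x z • (pauli (xc x z) (zc x z) ⊗ₖ pauli (xd x z) (zd x z)))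
    -- backward Clifford decomposition: Ω_A, Ω_B
    (c' : (Fin nD → ZMod 2) → (Fin nD → ZMod 2) → ℂ)
    (gxa gza : (Fin nD → ZMod 2) → (Fin nD → ZMod 2) → (Fin nA → ZMod 2))
    (gxb gzb : (Fin nD → ZMod 2) → (Fin nD → ZMod 2) → (Fin nB → ZMod 2))
    (hClif' : ∀ xq zq : Fin nD → ZMod 2, ‖c' xq zq‖ = 1 ∧
      Uᴴ * ((1 : Matrix (Fin nC → ZMod 2) (Fin nC → ZMod 2) ℂ) ⊗ₖ pauli xq zq) * U
        = c' xq zq • (pauli (gxa xq zq) (gza xq zq) ⊗ₖ pauli (gxb xq zq) (gzb xq zq)))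
    -- perfect decoupling: Λ_D is injective
    (hinj : Function.Injective
      (fun PA : (Fin nA → ZMod 2) × (Fin nA → ZMod 2) => (xd PA.1 PA.2, zd PA.1 PA.2))) :
    ∀ xa za : Fin nA → ZMod 2, ∃ xq zq : Fin nD → ZMod 2,
      gxa xq zq = xa ∧ gza xq zq = za := by
  have hc : ∀ x z, c x z ≠ 0 := fun x z => norm_ne_zero_iff.mp ((hClif x z).1 ▸ one_ne_zero)
  have hadd : ∀ P P' : (Fin nA → ZMod 2) × (Fin nA → ZMod 2),
      xd (P + P').1 (P + P').2 = xd P.1 P.2 + xd P'.1 P'.2 ∧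
        zd (P + P').1 (P + P').2 = zd P.1 P.2 + zd P'.1 P'.2 := fun P P' =>
    conj_pauli_label_add hU2 (hc _ _) (hClif P.1 P.2).2 (hClif P'.1 P'.2).2
      (hClif (P + P').1 (P + P').2).2
  let Λ : ((Fin nA → ZMod 2) × (Fin nA → ZMod 2)) →ₗ[ZMod 2]
      (Fin nD → ZMod 2) × (Fin nD → ZMod 2) :=
    (AddMonoidHom.mk' (fun P => (xd P.1 P.2, zd P.1 P.2)) fun P P' =>
      Prod.ext (hadd P P').1 (hadd P P').2).toZModLinearMap 2
  have hsurj := LinearMap.BilinForm.surjective_of_adjoint_of_injective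
    (swapPairing_nondegenerate (ZMod 2) (Fin nA)) (swapPairing_nondegenerate (ZMod 2) (Fin nD))
    (f := Λ) hinj (g := fun Q => (gxa Q.1 Q.2, gza Q.1 Q.2)) fun P Q =>
      conj_pauli_label_duality hU1 hU2 (hc _ _) (hClif P.1 P.2).2 (hClif' Q.1 Q.2).2
  intro xa za
  obtain ⟨Q, hQ⟩ := hsurj (xa, za)
  exact ⟨Q.1, Q.2, congr_arg Prod.fst hQ, congr_arg Prod.snd hQ⟩
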